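/- arXiv:2603.26943 — 9 statements merged into one kernel-verified Lean document; each statement's English description precedes it below -/
import Mathlib

section
/- A median semilattice is a distributive lattice if and only if it has a maximum element. -/
/-!
If `α` has binary joins it is directed, and a finite nonempty directed order has a greatest
element. Conversely, if `m` is the greatest element then `α` is order isomorphic to the
principal ideal `Set.Iic m`, which is a distributive lattice by hypothesis.
-/

def IsDistribLattice (α : Type*) [SemilatticeInf α] : Prop :=
  ∃ sup : α → α → α,
    (∀ a b : α, IsLUB {a, b} (sup a b)) ∧
    (∀ a b c : α, a ⊓ sup b c = sup (a ⊓ b) (a ⊓ c))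

namespace IsDistribLattice

variable {α β : Type*} [SemilatticeInf α] [SemilatticeInf β]

theorem exists_isTop [Finite α] [Nonempty α] (h : IsDistribLattice α) : ∃ m : α, IsTop m := by
  obtain ⟨sup, hlub, -⟩ := h
  have : IsDirectedOrder α :=
    ⟨fun a b => ⟨sup a b, (hlub a b).1 (Set.mem_insert a _),
      (hlub a b).1 (Set.mem_insert_of_mem a rfl)⟩⟩
  exact Finite.exists_le id

theorem of_orderIso (e : β ≃o α) (h : IsDistribLattice β) : IsDistribLattice α := by
  obtain ⟨sup, hlub, hdistrib⟩ := h
  refine ⟨fun a b => e (sup (e.symm a) (e.symm b)), fun a b => ?_, fun a b c => ?_⟩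
  · have hpair : ({a, b} : Set α) = e '' {e.symm a, e.symm b} := by
      simp only [Set.image_pair, OrderIso.apply_symm_apply]
    rw [hpair, e.isLUB_image']
    exact hlub _ _
  · calc a ⊓ e (sup (e.symm b) (e.symm c))
        = e (e.symm a ⊓ sup (e.symm b) (e.symm c)) := by rw [e.map_inf, e.apply_symm_apply]
      _ = e (sup (e.symm (a ⊓ b)) (e.symm (a ⊓ c))) := by
        rw [hdistrib, e.symm.map_inf, e.symm.map_inf]

end IsDistribLattice

def IsTop.orderIsoIic {α : Type*} [Preorder α] {m : α} (hm : IsTop m) : Set.Iic m ≃o α :=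
  (OrderIso.setCongr _ _ (Set.eq_univ_of_forall hm)).trans (OrderIso.Set.univ)

theorem stmt0_general {α : Type*} [SemilatticeInf α] [Finite α] [Nonempty α]
    (hideal : ∀ v : α, ∃ sup : Set.Iic v → Set.Iic v → Set.Iic v,
      (∀ a b : Set.Iic v, IsLUB {a, b} (sup a b)) ∧
      (∀ a b c : Set.Iic v, a ⊓ sup b c = sup (a ⊓ b) (a ⊓ c))) :
    (∃ sup : α → α → α,
      (∀ a b : α, IsLUB {a, b} (sup a b)) ∧
      (∀ a b c : α, a ⊓ sup b c = sup (a ⊓ b) (a ⊓ c))) ↔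
    ∃ m : α, ∀ x : α, x ≤ m :=
  ⟨IsDistribLattice.exists_isTop,
    fun ⟨_, hm⟩ => IsDistribLattice.of_orderIso (IsTop.orderIsoIic hm) (hideal _)⟩

/-- A median semilattice is a distributive lattice iff it has a maximum element.
A median semilattice is a (finite, nonempty) meet-semilattice in which
(i) every principal ideal `Set.Iic v` is a distributive lattice, and
(ii) any three elements have a common upper bound whenever each pair does.
"Is a distributive lattice" is rendered as the existence of a join operation
computing least upper bounds and satisfying the distributive law. -/
theorem stmt0 {α : Type*} [SemilatticeInf α] [Finite α] [Nonempty α]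
    (hideal : ∀ v : α, ∃ sup : Set.Iic v → Set.Iic v → Set.Iic v,
      (∀ a b : Set.Iic v, IsLUB {a, b} (sup a b)) ∧
      (∀ a b c : Set.Iic v, a ⊓ sup b c = sup (a ⊓ b) (a ⊓ c)))
    (hupper : ∀ a b c : α,
      (∃ u, a ≤ u ∧ b ≤ u) → (∃ u, a ≤ u ∧ c ≤ u) → (∃ u, b ≤ u ∧ c ≤ u) →
      ∃ u, a ≤ u ∧ b ≤ u ∧ c ≤ u) :
    (∃ sup : α → α → α,
      (∀ a b : α, IsLUB {a, b} (sup a b)) ∧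
      (∀ a b c : α, a ⊓ sup b c = sup (a ⊓ b) (a ⊓ c))) ↔
    ∃ m : α, ∀ x : α, x ≤ m :=
  stmt0_general hideal
end

section
/- Let P = (P⁻ ∪ P⁺, ≤) be an oriented mirror poset and let T be a complete closed subset. A subset Q ⊆ T⁺ = T ∩ P⁺ is a closed subset of the subposet induced by T⁺ if and only if the set S = Q ∪ {τ⁻ ∈ P⁻ : τ⁺ ∉ Q} (where τ⁻, τ⁺ denote the elements of the dual pair of τ lying in P⁻, P⁺ respectively) is a complete closed subset of P with S ∩ P⁺ = Q and S ∩ P⁺ ⊆ T ∩ P⁺. -/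
/-- In an oriented mirror poset with base `P⁻ = Pm` (so `P⁺ = Pmᶜ`), for a complete
closed subset `T` and `Q ⊆ T⁺ = T ∩ P⁺`: `Q` is a (downward) closed subset of the
subposet induced by `T⁺` iff `S = Q ∪ {τ⁻ ∈ P⁻ : τ⁺ ∉ Q}` is a complete closed
subset of `P` with `S ∩ P⁺ = Q` and `S ∩ P⁺ ⊆ T ∩ P⁺`. -/
theorem stmt6 {α : Type*} [PartialOrder α] [Finite α] (bar : α → α)
    (hinv : ∀ a, bar (bar a) = a)
    (hne : ∀ a, bar a ≠ a)
    (hincomp : ∀ a : α, ¬ a ≤ bar a ∧ ¬ bar a ≤ a)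
    (hmirror : ∀ a b : α, a ≤ b ↔ bar b ≤ bar a)
    (Pm : Set α)
    (hPmClosed : IsLowerSet Pm)
    (hPmComplete : ∀ a, a ∈ Pm ↔ bar a ∉ Pm)
    (T : Set α)
    (hTclosed : IsLowerSet T) (hTcomplete : ∀ a, a ∈ T ↔ bar a ∉ T)
    (Q : Set α) (hQ : Q ⊆ T ∩ Pmᶜ) :
    (∀ a ∈ T ∩ Pmᶜ, ∀ b ∈ T ∩ Pmᶜ, b ≤ a → a ∈ Q → b ∈ Q) ↔
      (IsLowerSet (Q ∪ {a | a ∈ Pm ∧ bar a ∉ Q}) ∧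
       (∀ a, a ∈ Q ∪ {a | a ∈ Pm ∧ bar a ∉ Q} ↔
          bar a ∉ Q ∪ {a | a ∈ Pm ∧ bar a ∉ Q}) ∧
       (Q ∪ {a | a ∈ Pm ∧ bar a ∉ Q}) ∩ Pmᶜ = Q ∧
       (Q ∪ {a | a ∈ Pm ∧ bar a ∉ Q}) ∩ Pmᶜ ⊆ T ∩ Pmᶜ) := by
  have hSQ : (Q ∪ {a | a ∈ Pm ∧ bar a ∉ Q}) ∩ Pmᶜ = Q := by
    ext a
    constructor
    · rintro ⟨(h | h), hn⟩
      · exact h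
      · exact absurd h.1 hn
    · intro h; exact ⟨Or.inl h, (hQ h).2⟩
  have hcomp : ∀ a, a ∈ Q ∪ {a | a ∈ Pm ∧ bar a ∉ Q} ↔
      bar a ∉ Q ∪ {a | a ∈ Pm ∧ bar a ∉ Q} := by
    intro a
    by_cases hp : a ∈ Pm
    · have hbp : bar a ∉ Pm := (hPmComplete a).1 hp
      have haQ : a ∉ Q := fun h => (hQ h).2 hp
      simp only [Set.mem_union, Set.mem_setOf_eq]
      constructor
      · rintro (h | ⟨_, h⟩)
        · exact absurd h haQ
        · rintro (h' | ⟨h', _⟩)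
          · exact h h'
          · exact hbp h'
      · intro h
        exact Or.inr ⟨hp, fun hb => h (Or.inl hb)⟩
    · have hbp : bar a ∈ Pm := by
        by_contra hb; exact hp ((hPmComplete a).2 hb)
      have hbQ : bar a ∉ Q := fun h => (hQ h).2 hbp
      simp only [Set.mem_union, Set.mem_setOf_eq]
      constructor
      · rintro (h | ⟨h', _⟩)
        · rintro (h2 | ⟨_, h2⟩)
          · exact hbQ h2
          · rw [hinv] at h2; exact h2 h
        · exact absurd h' hp
      · intro h
        by_contra hcon
        have haQ : a ∉ Q := fun hh => hcon (Or.inl hh)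
        exact h (Or.inr ⟨hbp, by rw [hinv]; exact haQ⟩)
  constructor
  · intro hL
    refine ⟨?_, hcomp, hSQ, by rw [hSQ]; exact hQ⟩
    intro a b hba ha
    by_cases hbP : b ∈ Pm
    · refine Or.inr ⟨hbP, ?_⟩
      intro hbQ
      have hbaT : bar a ≤ bar b := (hmirror b a).1 hba
      have hbbT : bar b ∈ T := (hQ hbQ).1
      have hbaInT : bar a ∈ T := hTclosed hbaT hbbT
      rcases ha with haQ | ⟨haP, hbaQ⟩
      · exact (hTcomplete a).1 (hQ haQ).1 hbaInT
      · have hbaPm : bar a ∉ Pm := (hPmComplete a).1 haP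
        exact hbaQ (hL (bar b) ⟨hbbT, (hQ hbQ).2⟩ (bar a) ⟨hbaInT, hbaPm⟩ hbaT hbQ)
    · rcases ha with haQ | ⟨haP, _⟩
      · have hbT : b ∈ T := hTclosed hba (hQ haQ).1
        exact Or.inl (hL a (hQ haQ) b ⟨hbT, hbP⟩ hba haQ)
      · exact absurd (hPmClosed hba haP) hbP
  · rintro ⟨hS, -, -, -⟩
    intro a _ b hb hba haQ
    rcases hS hba (Or.inl haQ) with h | ⟨h, _⟩
    · exact h
    · exact absurd h hb.2
end

section
/- Let P = (P⁻ ∪ P⁺, ≤) be an oriented mirror poset whose Hasse diagram has exactly 2k crossing edges, involving the dual-pair couples {α_i, β_i} for i = 1,…,k (meaning (α_i⁻, β_i⁺) and (β_i⁻, α_i⁺) are crossing edges). Then every complete closed subset S of P can be written as S = A_S ∪ Pred(A_S) ∪ B_S where A_S = ⋃_{i=1}^k A_{S,i} with A_{S,i} ∈ {{α_i⁺, β_i⁻}, {α_i⁻, β_i⁺}, {α_i⁻, β_i⁻}}, Pred(A_S) is the set of all predecessors in P of elements of A_S, and B_S contains exactly one element of each dual pair having no element in A_S ∪ Pred(A_S).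 -/
/-- Decomposition of complete closed subsets of an oriented mirror poset whose
Hasse diagram has exactly `2k` crossing edges, involving the dual-pair couples
`{α_i, β_i}` (with `a i = α_i⁻` and `b i = β_i⁻` the negative representatives):
every complete closed subset `S` can be written as
`S = A_S ∪ Pred(A_S) ∪ B_S`, where `A_S = ⋃ i, A_{S,i}` with
`A_{S,i} ∈ {{α_i⁺, β_i⁻}, {α_i⁻, β_i⁺}, {α_i⁻, β_i⁻}}`, and `B_S` contains
exactly one element of each dual pair having no element in `A_S ∪ Pred(A_S)`. -/
theorem stmt7 {α : Type*} [PartialOrder α] [Finite α] (bar : α → α)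
    (hinv : ∀ x, bar (bar x) = x)
    (hne : ∀ x, bar x ≠ x)
    (hincomp : ∀ x : α, ¬ x ≤ bar x ∧ ¬ bar x ≤ x)
    (hmirror : ∀ x y : α, x ≤ y ↔ bar y ≤ bar x)
    (Pm : Set α)
    (hPmClosed : IsLowerSet Pm)
    (hPmComplete : ∀ x, x ∈ Pm ↔ bar x ∉ Pm)
    (k : ℕ) (a b : Fin k → α)
    (hcross : ∀ i, a i ∈ Pm ∧ b i ∈ Pm ∧ (a i) ⋖ bar (b i) ∧ (b i) ⋖ bar (a i))
    (hdistinct : ∀ i j, ({a i, b i} : Set α) = {a j, b j} → i = j)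
    (hexact : ∀ x y : α, x ∈ Pm → y ∉ Pm → x ⋖ y →
      ∃ i, (x = a i ∧ y = bar (b i)) ∨ (x = b i ∧ y = bar (a i)))
    (S : Set α)
    (hSclosed : IsLowerSet S) (hScomplete : ∀ x, x ∈ S ↔ bar x ∉ S) :
    ∃ (A : Fin k → Set α) (B : Set α),
      (∀ i, A i = {bar (a i), b i} ∨ A i = {a i, bar (b i)} ∨ A i = {a i, b i}) ∧
      (∀ x ∈ B, (¬ ∃ y ∈ ⋃ i, A i, x ≤ y) ∧ (¬ ∃ y ∈ ⋃ i, A i, bar x ≤ y)) ∧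
      (∀ x : α, (¬ ∃ y ∈ ⋃ i, A i, x ≤ y) → (¬ ∃ y ∈ ⋃ i, A i, bar x ≤ y) →
        (x ∈ B ↔ bar x ∉ B)) ∧
      S = {x | ∃ y ∈ ⋃ i, A i, x ≤ y} ∪ B := by

  classical
  set A : Fin k → Set α := fun i =>
    if bar (a i) ∈ S then {bar (a i), b i}
    else if bar (b i) ∈ S then {a i, bar (b i)}
    else {a i, b i} with hA
  have hAS : ∀ i, A i ⊆ S := by
    intro i x hx
    simp only [hA] at hx
    split_ifs at hx with h1 h2
    · rcases hx with rfl | rfl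
      · exact h1
      · exact hSclosed (hcross i).2.2.2.le h1
    · rcases hx with rfl | rfl
      · exact hSclosed (hcross i).2.2.1.le h2
      · exact h2
    · rcases hx with rfl | rfl
      · exact (hScomplete _).2 h1
      · exact (hScomplete _).2 h2
  have hPred : ∀ x : α, (∃ y ∈ ⋃ i, A i, x ≤ y) → x ∈ S := by
    rintro x ⟨y, hy, hxy⟩
    rcases Set.mem_iUnion.1 hy with ⟨i, hi⟩
    exact hSclosed hxy (hAS i hi)
  refine ⟨A, S \ {x | ∃ y ∈ ⋃ i, A i, x ≤ y}, ?_, ?_, ?_, ?_⟩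
  · intro i
    simp only [hA]
    split_ifs with h1 h2
    · exact Or.inl rfl
    · exact Or.inr (Or.inl rfl)
    · exact Or.inr (Or.inr rfl)
  · rintro x ⟨hxS, hx⟩
    refine ⟨hx, ?_⟩
    intro hbar
    exact (hScomplete x).1 hxS (hPred _ hbar)
  · intro x hx hbx
    constructor
    · rintro ⟨hxS, -⟩
      rintro ⟨hbS, -⟩
      exact (hScomplete x).1 hxS hbS
    · intro h
      refine ⟨?_, hx⟩
      by_contra hxS
      have hbS : bar x ∈ S := by
        by_contra hb
        exact hxS ((hScomplete x).2 hb)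
      exact h ⟨hbS, hbx⟩
  · ext x
    constructor
    · intro hxS
      by_cases h : ∃ y ∈ ⋃ i, A i, x ≤ y
      · exact Or.inl h
      · exact Or.inr ⟨hxS, h⟩
    · rintro (h | ⟨h, -⟩)
      · exact hPred x h
      · exact h
end

section
/- Let P = (P⁻ ∪ P⁺, ≤) be an oriented mirror poset with exactly 2k crossing edges. Then the median semilattice L(P) of complete closed subsets of P, ordered by S ⊑ T iff S ∩ P⁺ ⊆ T ∩ P⁺, has at most 3^k maximal elements. -/
open Classical in
/-- In a finite poset, if `x ∈ Pm ∌ y` and `x ≤ y`, there is a covering pair crossing `Pm`. -/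
lemma stmt8_cross {α : Type*} [PartialOrder α] [Finite α] (Pm : Set α) :
    ∀ x : α, x ∈ Pm → ∀ y : α, x ≤ y → y ∉ Pm →
      ∃ u v, x ≤ u ∧ u ⋖ v ∧ v ≤ y ∧ u ∈ Pm ∧ v ∉ Pm := by
  intro x
  induction x using ((IsWellFounded.wf (r := ((· > ·) : α → α → Prop))).induction) with
  | _ x IH =>
  intro hx y hxy hy
  have hlt : x < y := lt_of_le_of_ne hxy (by rintro rfl; exact hy hx)
  obtain ⟨z, hxz, hzy⟩ := exists_covBy_le_of_lt hlt
  by_cases hz : z ∈ Pm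
  · obtain ⟨u, v, h1, h2, h3, h4, h5⟩ := IH z hxz.lt hz y hzy hy
    exact ⟨u, v, hxz.le.trans h1, h2, h3, h4, h5⟩
  · exact ⟨x, z, le_refl x, hxz, hzy, hx, hz⟩

/-- An oriented mirror poset with exactly `2k` crossing edges (involving the
dual-pair couples `{α_i, β_i}`, with `a i = α_i⁻`, `b i = β_i⁻`) has at most `3^k`
maximal elements in the median semilattice of complete closed subsets ordered by
`S ⊑ T ↔ S ∩ P⁺ ⊆ T ∩ P⁺`. -/
theorem stmt8 {α : Type*} [PartialOrder α] [Finite α] (bar : α → α)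
    (hinv : ∀ x, bar (bar x) = x)
    (hne : ∀ x, bar x ≠ x)
    (hincomp : ∀ x : α, ¬ x ≤ bar x ∧ ¬ bar x ≤ x)
    (hmirror : ∀ x y : α, x ≤ y ↔ bar y ≤ bar x)
    (Pm : Set α)
    (hPmClosed : IsLowerSet Pm)
    (hPmComplete : ∀ x, x ∈ Pm ↔ bar x ∉ Pm)
    (k : ℕ) (a b : Fin k → α)
    (hcross : ∀ i, a i ∈ Pm ∧ b i ∈ Pm ∧ (a i) ⋖ bar (b i) ∧ (b i) ⋖ bar (a i))
    (hdistinct : ∀ i j, ({a i, b i} : Set α) = {a j, b j} → i = j)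
    (hexact : ∀ x y : α, x ∈ Pm → y ∉ Pm → x ⋖ y →
      ∃ i, (x = a i ∧ y = bar (b i)) ∨ (x = b i ∧ y = bar (a i))) :
    {S : Set α | IsLowerSet S ∧ (∀ x, x ∈ S ↔ bar x ∉ S) ∧
      ∀ T : Set α, IsLowerSet T → (∀ x, x ∈ T ↔ bar x ∉ T) →
        S ∩ Pmᶜ ⊆ T ∩ Pmᶜ → T = S}.ncard ≤ 3 ^ k := by
  classical
  set M := {S : Set α | IsLowerSet S ∧ (∀ x, x ∈ S ↔ bar x ∉ S) ∧
      ∀ T : Set α, IsLowerSet T → (∀ x, x ∈ T ↔ bar x ∉ T) →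
        S ∩ Pmᶜ ⊆ T ∩ Pmᶜ → T = S} with hM
  -- exclusion: bar (a i) and bar (b i) can't both lie in a complete closed set
  have excl : ∀ (S : Set α), IsLowerSet S → (∀ x, x ∈ S ↔ bar x ∉ S) →
      ∀ i, bar (b i) ∈ S → bar (a i) ∉ S := by
    intro S hSl hSc i hb
    have hai : a i ∈ S := hSl ((hcross i).2.2.1.le) hb
    exact (hSc (a i)).mp hai
  -- push along a crossing edge
  have push : ∀ (S T : Set α), IsLowerSet S → IsLowerSet T →
      (∀ i, (bar (a i) ∈ S → bar (a i) ∈ T) ∧ (bar (b i) ∈ S → bar (b i) ∈ T)) →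
      ∀ x y : α, x ≤ y → y ∈ S → y ∉ Pm → x ∈ Pm → x ∈ T := by
    intro S T hSl hTl hst x y hxy hyS hyP hx
    obtain ⟨u, v, hxu, huv, hvy, hu, hv⟩ := stmt8_cross Pm x hx y hxy hyP
    have hvS : v ∈ S := hSl hvy hyS
    have hvT : v ∈ T := by
      obtain ⟨i, hi⟩ := hexact u v hu hv huv
      rcases hi with ⟨-, rfl⟩ | ⟨-, rfl⟩
      · exact (hst i).2 hvS
      · exact (hst i).1 hvS
    exact hTl (hxu.trans huv.le) hvT
  -- the key uniqueness lemma
  have uniq : ∀ S ∈ M, ∀ T ∈ M,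
      (∀ i, (bar (a i) ∈ S ↔ bar (a i) ∈ T) ∧ (bar (b i) ∈ S ↔ bar (b i) ∈ T)) →
      S = T := by
    intro S hS T hT hiff
    set W : Set α := (S ∩ T) ∪ (S ∩ Pmᶜ) ∪ (T ∩ Pmᶜ) with hW
    have hstST : ∀ i, (bar (a i) ∈ S → bar (a i) ∈ T) ∧ (bar (b i) ∈ S → bar (b i) ∈ T) :=
      fun i => ⟨(hiff i).1.mp, (hiff i).2.mp⟩
    have hstTS : ∀ i, (bar (a i) ∈ T → bar (a i) ∈ S) ∧ (bar (b i) ∈ T → bar (b i) ∈ S) :=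
      fun i => ⟨(hiff i).1.mpr, (hiff i).2.mpr⟩
    have hWl : IsLowerSet W := by
      intro y x hxy hy
      rcases hy with (⟨hyS, hyT⟩ | ⟨hyS, hyP⟩) | ⟨hyT, hyP⟩
      · exact Or.inl (Or.inl ⟨hS.1 hxy hyS, hT.1 hxy hyT⟩)
      · have hxS : x ∈ S := hS.1 hxy hyS
        by_cases hxT : x ∈ T
        · exact Or.inl (Or.inl ⟨hxS, hxT⟩)
        · by_cases hxP : x ∈ Pm
          · exact absurd (push S T hS.1 hT.1 hstST x y hxy hyS hyP hxP) hxT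
          · exact Or.inl (Or.inr ⟨hxS, hxP⟩)
      · have hxT : x ∈ T := hT.1 hxy hyT
        by_cases hxS : x ∈ S
        · exact Or.inl (Or.inl ⟨hxS, hxT⟩)
        · by_cases hxP : x ∈ Pm
          · exact absurd (push T S hT.1 hS.1 hstTS x y hxy hyT hyP hxP) hxS
          · exact Or.inr ⟨hxT, hxP⟩
    have hWc : ∀ x, x ∈ W ↔ bar x ∉ W := by
      intro x
      have h1 := hS.2.1 x
      have h2 := hT.2.1 x
      have h3 := hS.2.1 (bar x)
      have h4 := hT.2.1 (bar x)
      have h5 := hPmComplete x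
      have h6 := hPmComplete (bar x)
      rw [hinv x] at h3 h4 h6
      simp only [hW, Set.mem_union, Set.mem_inter_iff, Set.mem_compl_iff]
      tauto
    have hSsub : S ∩ Pmᶜ ⊆ W ∩ Pmᶜ := by
      intro x hx
      exact ⟨Or.inl (Or.inr hx), hx.2⟩
    have hTsub : T ∩ Pmᶜ ⊆ W ∩ Pmᶜ := by
      intro x hx
      exact ⟨Or.inr hx, hx.2⟩
    have e1 : W = S := hS.2.2 W hWl hWc hSsub
    have e2 : W = T := hT.2.2 W hWl hWc hTsub
    rw [← e1, e2]
  -- injection into Fin k → Fin 3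
  set f : Set α → (Fin k → Fin 3) := fun S i =>
    if bar (a i) ∈ S then 0 else if bar (b i) ∈ S then 1 else 2 with hf
  have hinj : Set.InjOn f M := by
    intro S hS T hT hfeq
    apply uniq S hS T hT
    intro i
    have e : (if bar (a i) ∈ S then (0 : Fin 3) else if bar (b i) ∈ S then 1 else 2)
        = (if bar (a i) ∈ T then 0 else if bar (b i) ∈ T then 1 else 2) := congrFun hfeq i
    have eS := excl S hS.1 hS.2.1 i
    have eT := excl T hT.1 hT.2.1 i
    by_cases h1 : bar (a i) ∈ S <;> by_cases h2 : bar (a i) ∈ T <;>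
      by_cases h3 : bar (b i) ∈ S <;> by_cases h4 : bar (b i) ∈ T <;>
      simp only [h1, h2, h3, h4, if_true, if_false] at e ⊢ <;>
      first
        | trivial
        | exact absurd h1 (eS h3)
        | exact absurd h2 (eT h4)
        | exact absurd e (by decide)
  calc M.ncard ≤ (Set.univ : Set (Fin k → Fin 3)).ncard :=
        Set.ncard_le_ncard_of_injOn f (fun x _ => Set.mem_univ _) hinj Set.finite_univ
    _ = 3 ^ k := by
        rw [Set.ncard_univ, Nat.card_eq_fintype_card]
        simp [Fintype.card_fun]
end

section
/- Let P be a mirror poset. There is an orientation of P with zero crossing edges if and only if for every dual pair {ρ, ρ̄}, the elements ρ and ρ̄ lie in distinct connected components of the comparability graph of P (equivalently, of the undirected Hasse diagram of P). -/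
/-!
A lower set `P⁻` with no crossing edge is also an upper set, because in a finite poset every
relation `x ≤ y` is a chain of covering relations. Being both lower and upper, `P⁻` is a union
of connected components of the comparability graph, so it cannot separate `ρ` from `ρ̄` if they
are connected. Conversely, if no `ρ` is connected to `ρ̄`, fix any linear order on the set of
components and put `ρ` into `P⁻` when the component of `ρ` precedes that of `ρ̄`; the order
reversal `ρ ↦ ρ̄` maps components to components, so this set is a union of components.
-/

open Relation

theorem isUpperSet_of_forall_covBy {α : Type*} [PartialOrder α] [LocallyFiniteOrder α]
    {s : Set α} (hs : ∀ ⦃x y⦄, x ⋖ y → x ∈ s → y ∈ s) : IsUpperSet s := by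
  intro x y hxy hx
  have hchain := le_iff_reflTransGen_covBy.mp hxy
  clear hxy
  induction hchain with
  | refl => exact hx
  | tail _ hcov ih => exact hs hcov ih

theorem IsLowerSet.mem_iff_of_eqvGen {α : Type*} [LE α] {s : Set α} (hl : IsLowerSet s)
    (hu : IsUpperSet s) {x y : α} (h : EqvGen (· ≤ ·) x y) : x ∈ s ↔ y ∈ s := by
  induction h with
  | rel x y hxy => exact ⟨fun hx => hu hxy hx, fun hy => hl hxy hy⟩
  | refl => rfl
  | symm _ _ _ ih => exact ih.symm
  | trans _ _ _ _ _ ih₁ ih₂ => exact ih₁.trans ih₂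

theorem exists_isLowerSet_isUpperSet_mem_iff_notMem {α : Type*} [Preorder α] {bar : α → α}
    (hinv : Function.Involutive bar) (hanti : Antitone bar)
    (hsep : ∀ a, ¬ EqvGen (· ≤ ·) a (bar a)) :
    ∃ s : Set α, IsLowerSet s ∧ IsUpperSet s ∧ ∀ a, a ∈ s ↔ bar a ∉ s := by
  let c : α → Quot (α := α) (· ≤ ·) := Quot.mk _
  let : LinearOrder (Quot (α := α) (· ≤ ·)) := IsWellOrder.linearOrder WellOrderingRel
  let s : Set α := {a | c a < c (bar a)}
  have hmem : ∀ ⦃x y⦄, x ≤ y → (x ∈ s ↔ y ∈ s) := by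
    intro x y hxy
    have hc : c x = c y := Quot.sound hxy
    have hcbar : c (bar x) = c (bar y) := (Quot.sound (hanti hxy)).symm
    simp only [s, Set.mem_ofPred_eq, hc, hcbar]
  refine ⟨s, fun x y hyx hx => (hmem hyx).mpr hx, fun x y hxy hx => (hmem hxy).mp hx, ?_⟩
  intro a
  have hne : c a ≠ c (bar a) := fun h => hsep a (Quot.eqvGen_exact h)
  simp only [s, Set.mem_ofPred_eq, hinv a, not_lt]
  exact hne.le_iff_lt.symm

theorem stmt9_general {α : Type*} [PartialOrder α] [Finite α] (bar : α → α)
    (hinv : ∀ a, bar (bar a) = a)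
    (hmirror : ∀ a b : α, a ≤ b ↔ bar b ≤ bar a) :
    (∃ Pm : Set α, IsLowerSet Pm ∧ (∀ a, a ∈ Pm ↔ bar a ∉ Pm) ∧
        ∀ x ∈ Pm, ∀ y, y ∉ Pm → ¬ x ⋖ y) ↔
      ∀ a : α, ¬ Relation.ReflTransGen (fun x y : α => x ≤ y ∨ y ≤ x) a (bar a) := by
  have hconn : ∀ a, ReflTransGen (fun x y : α => x ≤ y ∨ y ≤ x) a (bar a) ↔
      EqvGen (· ≤ ·) a (bar a) := fun a => by
    rw [← EqvGen.reflTransGen_symmGen]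
    rfl
  constructor
  · rintro ⟨Pm, hl, hdual, hcross⟩ a ha
    let : LocallyFiniteOrder α := LocallyFiniteOrder.ofFiniteIcc fun _ _ => Set.toFinite _
    have hu : IsUpperSet Pm :=
      isUpperSet_of_forall_covBy fun x y hxy hx => by_contra fun hy => hcross x hx y hy hxy
    exact iff_not_self ((hl.mem_iff_of_eqvGen hu ((hconn a).mp ha)).symm.trans (hdual a))
  · intro hsep
    obtain ⟨s, hl, hu, hs⟩ := exists_isLowerSet_isUpperSet_mem_iff_notMem hinv
      (fun a b hab => (hmirror a b).mp hab) fun a => (hconn a).not.mp (hsep a)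
    exact ⟨s, hl, hs, fun x hx y hy hxy => hy (hu hxy.le hx)⟩

/-- A mirror poset admits an orientation with zero crossing edges iff for every
dual pair `{ρ, ρ̄}`, the elements `ρ` and `ρ̄` lie in distinct connected components
of the comparability graph. -/
theorem stmt9 {α : Type*} [PartialOrder α] [Finite α] (bar : α → α)
    (hinv : ∀ a, bar (bar a) = a)
    (hne : ∀ a, bar a ≠ a)
    (hincomp : ∀ a : α, ¬ a ≤ bar a ∧ ¬ bar a ≤ a)
    (hmirror : ∀ a b : α, a ≤ b ↔ bar b ≤ bar a) :
    (∃ Pm : Set α, IsLowerSet Pm ∧ (∀ a, a ∈ Pm ↔ bar a ∉ Pm) ∧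
        ∀ x ∈ Pm, ∀ y, y ∉ Pm → ¬ x ⋖ y) ↔
      ∀ a : α, ¬ Relation.ReflTransGen (fun x y : α => x ≤ y ∨ y ≤ x) a (bar a) :=
  stmt9_general bar hinv hmirror
end

section
/- Let G = (V, E) be a finite simple graph and let P be the mirror poset on {v, v̄ : v ∈ V} with relations v ≤ ū and u ≤ v̄ for each edge {u,v} ∈ E. For U ⊆ V, define P⁻_U = {u : u ∈ U} ∪ {v̄ : v ∈ V ∖ U} and P⁺_U its complement. Then U is a vertex cover of G if and only if P⁻_U is a (complete) closed subset of P, i.e., (P⁻_U, P⁺_U) is an orientation of P. -/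
/-- For the mirror poset constructed from a finite simple graph `G` (on `V ⊕ V`,
with relations `u ≤ v̄` for edges `{u,v}`), a subset `U ⊆ V` is a vertex cover of
`G` iff `P⁻_U = {u : u ∈ U} ∪ {v̄ : v ∉ U}` is a complete closed subset, i.e.
`(P⁻_U, P⁺_U)` is an orientation of the mirror poset. -/
theorem stmt11 {V : Type*} [Fintype V] (G : SimpleGraph V) (U : Set V) :
    let le : V ⊕ V → V ⊕ V → Prop := fun x y =>
      x = y ∨ ∃ u v, G.Adj u v ∧ x = Sum.inl u ∧ y = Sum.inr v
    let bar : V ⊕ V → V ⊕ V := Sum.elim Sum.inr Sum.inl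
    let PmU : Set (V ⊕ V) := {x | Sum.elim (fun u => u ∈ U) (fun v => v ∉ U) x}
    (∀ u v, G.Adj u v → u ∈ U ∨ v ∈ U) ↔
      ((∀ x y, le x y → y ∈ PmU → x ∈ PmU) ∧ (∀ x, x ∈ PmU ↔ bar x ∉ PmU)) := by
  intro le bar PmU
  constructor
  · intro hcov
    refine ⟨?_, ?_⟩
    · rintro x y (rfl | ⟨u, v, hadj, rfl, rfl⟩) hy
      · exact hy
      · simp only [PmU, Set.mem_setOf_eq, Sum.elim_inr] at hy
        simpa [PmU] using (hcov u v hadj).resolve_right hy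
    · rintro (u | v) <;> simp [PmU, bar]
  · rintro ⟨hclosed, -⟩ u v hadj
    by_cases hv : v ∈ U
    · exact Or.inr hv
    · left
      have := hclosed (Sum.inl u) (Sum.inr v) (Or.inr ⟨u, v, hadj, rfl, rfl⟩)
        (by simpa [PmU] using hv)
      simpa [PmU] using this
end

section
/- Let G = (V, E) be a finite simple graph with maximum degree 3, and let G' be obtained from G by replacing each degree-1 vertex v (with unique neighbor w) by a gadget consisting of a 4-cycle v_n, v, v_s, v_w together with the chord {v_n, v_s}, keeping the edge {v, w}. If G has g degree-1 vertices, then G has a vertex cover of size at most k if and only if G' has a vertex cover of size at most k + 2g. -/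
/-- Gadget reduction: let `G` have maximum degree 3 and let `G'` be obtained from
`G` by attaching, to each degree-1 vertex `v` (kept as `Sum.inl v`, playing the
role of `v_e`), a gadget 4-cycle `v_n, v, v_s, v_w` with chord `{v_n, v_s}`
(the gadget vertices are `Sum.inr (v, 0) = v_n`, `Sum.inr (v, 1) = v_s`,
`Sum.inr (v, 2) = v_w`), keeping all original edges. If `g` is the number of
degree-1 vertices of `G`, then `G` has a vertex cover of size at most `k` iff
`G'` has a vertex cover of size at most `k + 2g`. -/
theorem stmt13 {V : Type*} [Fintype V] [DecidableEq V]
    (G : SimpleGraph V) [DecidableRel G.Adj]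
    (hdeg : ∀ v : V, G.degree v ≤ 3) (k : ℕ) :
    let W := V ⊕ ({v : V // G.degree v = 1} × Fin 3)
    let G' : SimpleGraph W := SimpleGraph.fromRel (fun x y =>
      (∃ u v : V, G.Adj u v ∧ x = Sum.inl u ∧ y = Sum.inl v) ∨
      (∃ v : {v : V // G.degree v = 1},
        (x = Sum.inl v.1 ∧ (y = Sum.inr (v, 0) ∨ y = Sum.inr (v, 1))) ∨
        (x = Sum.inr (v, 0) ∧ (y = Sum.inr (v, 1) ∨ y = Sum.inr (v, 2))) ∨
        (x = Sum.inr (v, 1) ∧ y = Sum.inr (v, 2))))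
    ((∃ A : Set V, (∀ u v, G.Adj u v → u ∈ A ∨ v ∈ A) ∧ A.ncard ≤ k) ↔
      (∃ B : Set W, (∀ x y, G'.Adj x y → x ∈ B ∨ y ∈ B) ∧
        B.ncard ≤ k + 2 * {v : V | G.degree v = 1}.ncard)) := by
  classical
  intro W G'
  have hg : {v : V | G.degree v = 1}.ncard = Nat.card {v : V // G.degree v = 1} :=
    (Nat.card_coe_set_eq _).symm
  constructor
  · rintro ⟨A, hA, hAk⟩
    set f : {v : V // G.degree v = 1} × Fin 2 → W :=
      (fun p => Sum.inr (p.1, p.2.castSucc)) with hf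
    have hfinj : Function.Injective f := by
      intro a b hab
      obtain ⟨h1, h2⟩ := Prod.mk.injEq .. ▸ Sum.inr_injective hab
      exact Prod.ext h1 (Fin.castSucc_injective _ h2)
    refine ⟨Sum.inl '' A ∪ Set.range f, ?_, ?_⟩
    · have key : ∀ x y : W,
        ((∃ u v : V, G.Adj u v ∧ x = Sum.inl u ∧ y = Sum.inl v) ∨
          (∃ v : {v : V // G.degree v = 1},
            (x = Sum.inl v.1 ∧ (y = Sum.inr (v, 0) ∨ y = Sum.inr (v, 1))) ∨
            (x = Sum.inr (v, 0) ∧ (y = Sum.inr (v, 1) ∨ y = Sum.inr (v, 2))) ∨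
            (x = Sum.inr (v, 1) ∧ y = Sum.inr (v, 2)))) →
          x ∈ Sum.inl '' A ∪ Set.range f ∨ y ∈ Sum.inl '' A ∪ Set.range f := by
        intro x y h
        have h0 : ∀ v : {v : V // G.degree v = 1},
            (Sum.inr (v, (0 : Fin 3)) : W) ∈ Set.range f := by
          intro v; exact ⟨(v, 0), by simp [hf]⟩
        have h1 : ∀ v : {v : V // G.degree v = 1},
            (Sum.inr (v, (1 : Fin 3)) : W) ∈ Set.range f := by
          intro v; exact ⟨(v, 1), by simp [hf]⟩
        rcases h with ⟨u, v, huv, rfl, rfl⟩ | ⟨v, ⟨rfl, h⟩ | ⟨rfl, h⟩ | ⟨rfl, rfl⟩⟩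
        · rcases hA u v huv with hu | hv
          · exact Or.inl (Or.inl ⟨u, hu, rfl⟩)
          · exact Or.inr (Or.inl ⟨v, hv, rfl⟩)
        · rcases h with rfl | rfl
          · exact Or.inr (Or.inr (h0 v))
          · exact Or.inr (Or.inr (h1 v))
        · exact Or.inl (Or.inr (h0 v))
        · exact Or.inl (Or.inr (h1 v))
      intro x y hxy
      rw [SimpleGraph.fromRel_adj] at hxy
      rcases hxy.2 with h | h
      · exact key x y h
      · exact (key y x h).symm
    · have h1 : (Sum.inl '' A : Set W).ncard = A.ncard :=
        Set.ncard_image_of_injective _ Sum.inl_injective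
      have h2 : (Set.range f).ncard = Nat.card ({v : V // G.degree v = 1} × Fin 2) := by
        rw [← Set.image_univ, Set.ncard_image_of_injective _ hfinj, Set.ncard_univ]
      have h3 : Nat.card ({v : V // G.degree v = 1} × Fin 2) =
          Nat.card {v : V // G.degree v = 1} * 2 := by
        simp [Nat.card_eq_fintype_card]
      calc (Sum.inl '' A ∪ Set.range f).ncard
          ≤ (Sum.inl '' A : Set W).ncard + (Set.range f).ncard := Set.ncard_union_le _ _
        _ ≤ k + 2 * {v : V | G.degree v = 1}.ncard := by
            rw [h1, h2, h3, hg]; omega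
  · rintro ⟨B, hB, hBk⟩
    have hgadget : ∀ (v : {v : V // G.degree v = 1}) (i j : Fin 3), i ≠ j →
        (Sum.inr (v, i) : W) ∈ B ∨ (Sum.inr (v, j) : W) ∈ B → True := fun _ _ _ _ _ => trivial
    -- triangle edges
    have tri : ∀ (v : {v : V // G.degree v = 1}) (i j : Fin 3),
        (i = 0 ∧ j = 1) ∨ (i = 0 ∧ j = 2) ∨ (i = 1 ∧ j = 2) →
        (Sum.inr (v, i) : W) ∈ B ∨ (Sum.inr (v, j) : W) ∈ B := by
      intro v i j hij
      apply hB
      rw [SimpleGraph.fromRel_adj]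
      have hne : ∀ (i j : Fin 3), i ≠ j → (Sum.inr (v, i) : W) ≠ Sum.inr (v, j) :=
        fun i j hij h => hij (congrArg Prod.snd (Sum.inr_injective h))
      rcases hij with ⟨rfl, rfl⟩ | ⟨rfl, rfl⟩ | ⟨rfl, rfl⟩
      · exact ⟨hne 0 1 (by decide), Or.inl (Or.inr ⟨v, Or.inr (Or.inl ⟨rfl, Or.inl rfl⟩)⟩)⟩
      · exact ⟨hne 0 2 (by decide), Or.inl (Or.inr ⟨v, Or.inr (Or.inl ⟨rfl, Or.inr rfl⟩)⟩)⟩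
      · exact ⟨hne 1 2 (by decide), Or.inl (Or.inr ⟨v, Or.inr (Or.inr ⟨rfl, rfl⟩)⟩)⟩
    set A : Set V := Sum.inl ⁻¹' B with hAdef
    refine ⟨A, ?_, ?_⟩
    · intro u v huv
      apply hB
      rw [SimpleGraph.fromRel_adj]
      exact ⟨fun h => huv.ne (Sum.inl_injective h), Or.inl (Or.inl ⟨u, v, huv, rfl, rfl⟩)⟩
    · -- counting
      set C : Set ({v : V // G.degree v = 1} × Fin 3) := Sum.inr ⁻¹' B with hCdef
      have hsub : (Sum.inl '' A ∪ Sum.inr '' C : Set W) ⊆ B := by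
        rintro x (⟨a, ha, rfl⟩ | ⟨c, hc, rfl⟩)
        · exact ha
        · exact hc
      have hdisj : Disjoint (Sum.inl '' A : Set W) (Sum.inr '' C) := by
        rw [Set.disjoint_left]
        rintro x ⟨a, _, rfl⟩ ⟨c, _, h⟩
        exact Sum.inl_ne_inr h.symm
      have hcard1 : A.ncard + C.ncard ≤ B.ncard := by
        have := Set.ncard_le_ncard hsub (Set.toFinite B)
        rwa [Set.ncard_union_eq hdisj (Set.toFinite _) (Set.toFinite _),
          Set.ncard_image_of_injective _ Sum.inl_injective,
          Set.ncard_image_of_injective _ Sum.inr_injective] at this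
      -- C has at least 2 elements per gadget
      have hCfin : C.Finite := Set.toFinite C
      have hCcard : 2 * Nat.card {v : V // G.degree v = 1} ≤ C.ncard := by
        rw [Set.ncard_eq_toFinset_card' ]
        have hfib := Finset.card_eq_sum_card_fiberwise
          (f := Prod.fst) (s := C.toFinset) (t := Finset.univ)
          (fun x _ => Finset.mem_univ _)
        rw [hfib]
        have hlow : ∀ v : {v : V // G.degree v = 1},
            2 ≤ (C.toFinset.filter (fun p => p.1 = v)).card := by
          intro v
          have h01 := tri v 0 1 (Or.inl ⟨rfl, rfl⟩)
          have h02 := tri v 0 2 (Or.inr (Or.inl ⟨rfl, rfl⟩))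
          have h12 := tri v 1 2 (Or.inr (Or.inr ⟨rfl, rfl⟩))
          have : ∃ i j : Fin 3, i ≠ j ∧ (v, i) ∈ C ∧ (v, j) ∈ C := by
            rcases h01 with h | h
            · rcases h12 with h' | h'
              · exact ⟨0, 1, by decide, h, h'⟩
              · exact ⟨0, 2, by decide, h, h'⟩
            · rcases h02 with h' | h'
              · exact ⟨0, 1, by decide, h', h⟩
              · exact ⟨1, 2, by decide, h, h'⟩
          obtain ⟨i, j, hij, hi, hj⟩ := this
          have hpair : ({(v, i), (v, j)} : Finset _) ⊆
              C.toFinset.filter (fun p => p.1 = v) := by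
            intro p hp
            rw [Finset.mem_insert, Finset.mem_singleton] at hp
            rcases hp with rfl | rfl <;>
              · rw [Finset.mem_filter, Set.mem_toFinset]; exact ⟨by assumption, rfl⟩
          have h2 : ({(v, i), (v, j)} : Finset _).card = 2 :=
            Finset.card_pair (fun h => hij (congrArg Prod.snd h))
          calc 2 = ({(v, i), (v, j)} : Finset _).card := h2.symm
            _ ≤ _ := Finset.card_le_card hpair
        calc 2 * Nat.card {v : V // G.degree v = 1}
            = ∑ _v : {v : V // G.degree v = 1}, 2 := by
              simp [Nat.card_eq_fintype_card, mul_comm]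
          _ ≤ ∑ v : {v : V // G.degree v = 1},
                (C.toFinset.filter (fun p => p.1 = v)).card :=
              Finset.sum_le_sum (fun v _ => hlow v)
      rw [hg] at hBk
      omega
end

section
/- Let P be a mirror poset with orientation (P⁻, P⁺), and suppose the dual pair {α, β} is involved in a crossing edge, meaning α⁻ is covered by β⁺ (and hence β⁻ is covered by α⁺) in the Hasse diagram. Then for every complete closed subset S of P, exactly one of the following three sets is contained in S: {α⁺, β⁻}, {α⁻, β⁺}, or {α⁻, β⁻} (and {α⁺, β⁺} ⊈ S). -/
/-- Suppose the dual pair `{α, β}` is involved in a crossing edge of an oriented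
mirror poset: `am = α⁻ ∈ P⁻` is covered by `bar bm = β⁺` and `bm = β⁻ ∈ P⁻` is
covered by `bar am = α⁺`. Then for every complete closed subset `S`, exactly one
of `{α⁺, β⁻}`, `{α⁻, β⁺}`, `{α⁻, β⁻}` is contained in `S`, and
`{α⁺, β⁺} ⊄ S`. -/
theorem stmt18 {α : Type*} [PartialOrder α] [Finite α] (bar : α → α)
    (hinv : ∀ a, bar (bar a) = a)
    (hne : ∀ a, bar a ≠ a)
    (hincomp : ∀ a : α, ¬ a ≤ bar a ∧ ¬ bar a ≤ a)
    (hmirror : ∀ a b : α, a ≤ b ↔ bar b ≤ bar a)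
    (Pm : Set α)
    (hPmClosed : IsLowerSet Pm)
    (hPmComplete : ∀ a, a ∈ Pm ↔ bar a ∉ Pm)
    (am bm : α) (ham : am ∈ Pm) (hbm : bm ∈ Pm)
    (hcross1 : am ⋖ bar bm) (hcross2 : bm ⋖ bar am)
    (S : Set α)
    (hSclosed : IsLowerSet S) (hScomplete : ∀ a, a ∈ S ↔ bar a ∉ S) :
    (({bar am, bm} : Set α) ⊆ S ∨ ({am, bar bm} : Set α) ⊆ S ∨
      ({am, bm} : Set α) ⊆ S) ∧
    ¬ (({bar am, bm} : Set α) ⊆ S ∧ ({am, bar bm} : Set α) ⊆ S) ∧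
    ¬ (({bar am, bm} : Set α) ⊆ S ∧ ({am, bm} : Set α) ⊆ S) ∧
    ¬ (({am, bar bm} : Set α) ⊆ S ∧ ({am, bm} : Set α) ⊆ S) ∧
    ¬ (({bar am, bar bm} : Set α) ⊆ S) := by
  have hamS_iff := hScomplete am
  have hbmS_iff := hScomplete bm
  have hbamS_iff := hScomplete (bar am)
  have hbbmS_iff := hScomplete (bar bm)
  simp only [Set.insert_subset_iff, Set.singleton_subset_iff]
  refine ⟨?_, ?_, ?_, ?_, ?_⟩
  · by_cases h1 : am ∈ S
    · by_cases h2 : bm ∈ S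
      · exact Or.inr (Or.inr ⟨h1, h2⟩)
      · have : bar bm ∈ S := by
          rw [hbbmS_iff, hinv]; exact h2
        exact Or.inr (Or.inl ⟨h1, this⟩)
    · have hba : bar am ∈ S := by rw [hbamS_iff, hinv]; exact h1
      have hb : bm ∈ S := hSclosed hcross2.le hba
      exact Or.inl ⟨hba, hb⟩
  · rintro ⟨⟨h1, -⟩, ⟨h2, -⟩⟩
    exact (hamS_iff.mp h2) h1
  · rintro ⟨⟨h1, -⟩, ⟨h2, -⟩⟩
    exact (hamS_iff.mp h2) h1
  · rintro ⟨⟨-, h1⟩, ⟨-, h2⟩⟩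
    exact (hbmS_iff.mp h2) h1
  · rintro ⟨h1, h2⟩
    have : am ∈ S := hSclosed hcross1.le h2
    exact (hamS_iff.mp this) h1
end

section
/- Let P be a mirror poset and let U be a partially complete closed subset of P (downward closed and containing at most one element of each dual pair). Then there exists a complete closed subset S of P with U ⊆ S. -/
/-! Take a closed, partially complete set `T ⊇ U` that is maximal for inclusion. If some pair
`{a, ā}` were missing from `T`, choose `a` minimal among such elements. Then `T ∪ Iic a` is still
closed and partially complete: an element `b ≤ a` with `b̄ ∈ T` would force `ā ≤ b̄ ∈ T`, and
`b, b̄ ≤ a` is impossible, for `b = a` by incomparability and for `b < a` since then one of `b, b̄`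
lies in `T`. This contradicts maximality. -/

namespace MirrorPoset

variable {α : Type*} [PartialOrder α] {bar : α → α}

def IsPartiallyComplete (bar : α → α) (T : Set α) : Prop :=
  ∀ a ∈ T, bar a ∉ T

theorem isPartiallyComplete_union_Iic (hinv : Function.Involutive bar) (hanti : Antitone bar)
    (hincomp : ∀ a, ¬ bar a ≤ a) {T : Set α} (hT : IsLowerSet T)
    (hTpart : IsPartiallyComplete bar T) {a : α} (ha : bar a ∉ T)
    (hbelow : ∀ x < a, x ∈ T ∨ bar x ∈ T) :
    IsPartiallyComplete bar (T ∪ Set.Iic a) := by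
  have below_a : ∀ x ≤ a, bar x ∉ T := fun x hx hxT => ha (hT (hanti hx) hxT)
  have bar_below_a : ∀ x, bar x ≤ a → x ∉ T := fun x hx hxT =>
    below_a (bar x) hx (by rwa [hinv x])
  rintro b (hbT | hba : b ∈ T ∨ b ≤ a) (hbbT | hbba : bar b ∈ T ∨ bar b ≤ a)
  · exact hTpart b hbT hbbT
  · exact bar_below_a b hbba hbT
  · exact below_a b hba hbbT
  · obtain rfl | hlt := hba.eq_or_lt
    · exact hincomp b hbba
    · rcases hbelow b hlt with hbT | hbbT
      · exact bar_below_a b hbba hbT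
      · exact below_a b hba hbbT

theorem mem_or_bar_mem_of_maximal [WellFoundedLT α] (hinv : Function.Involutive bar)
    (hanti : Antitone bar) (hincomp : ∀ a, ¬ bar a ≤ a) {T : Set α}
    (hT : Maximal (fun S => IsLowerSet S ∧ IsPartiallyComplete bar S) T) (a : α) :
    a ∈ T ∨ bar a ∈ T := by
  induction a using WellFoundedLT.induction with
  | _ a hbelow =>
    by_contra! ⟨haT, hbaT⟩
    have hextend : IsLowerSet (T ∪ Set.Iic a) ∧ IsPartiallyComplete bar (T ∪ Set.Iic a) :=
      ⟨hT.prop.1.union (isLowerSet_Iic a),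
        isPartiallyComplete_union_Iic hinv hanti hincomp hT.prop.1 hT.prop.2 hbaT hbelow⟩
    exact haT (hT.2 hextend Set.subset_union_left (Or.inr le_rfl))

end MirrorPoset

theorem stmt19_general {α : Type*} [PartialOrder α] [Finite α] (bar : α → α)
    (hinv : ∀ a, bar (bar a) = a)
    (hincomp : ∀ a : α, ¬ a ≤ bar a ∧ ¬ bar a ≤ a)
    (hmirror : ∀ a b : α, a ≤ b ↔ bar b ≤ bar a)
    (U : Set α)
    (hUclosed : IsLowerSet U)
    (hUpartial : ∀ a ∈ U, bar a ∉ U) :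
    ∃ S : Set α, IsLowerSet S ∧ (∀ a, a ∈ S ↔ bar a ∉ S) ∧ U ⊆ S := by
  obtain ⟨T, hUT, hT⟩ := Set.Finite.exists_le_maximal
    (s := {S : Set α | IsLowerSet S ∧ MirrorPoset.IsPartiallyComplete bar S}) (Set.toFinite _)
    ⟨hUclosed, hUpartial⟩
  have hcomplete := MirrorPoset.mem_or_bar_mem_of_maximal hinv (fun a b => (hmirror a b).1)
    (fun a => (hincomp a).2) hT
  refine ⟨T, hT.prop.1, fun a => ⟨hT.prop.2 a, fun hbaT => ?_⟩, hUT⟩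
  exact (hcomplete a).resolve_right hbaT

/-- Every partially complete closed subset `U` of a mirror poset (downward closed
and containing at most one element of each dual pair) extends to a complete
closed subset `S` with `U ⊆ S`. -/
theorem stmt19 {α : Type*} [PartialOrder α] [Finite α] (bar : α → α)
    (hinv : ∀ a, bar (bar a) = a)
    (hne : ∀ a, bar a ≠ a)
    (hincomp : ∀ a : α, ¬ a ≤ bar a ∧ ¬ bar a ≤ a)
    (hmirror : ∀ a b : α, a ≤ b ↔ bar b ≤ bar a)
    (U : Set α)
    (hUclosed : IsLowerSet U)
    (hUpartial : ∀ a ∈ U, bar a ∉ U) :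
    ∃ S : Set α, IsLowerSet S ∧ (∀ a, a ∈ S ↔ bar a ∉ S) ∧ U ⊆ S :=
  stmt19_general bar hinv hincomp hmirror U hUclosed hUpartial
end
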